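/- The set B₂ is nowhere dense in the space H(A₂), and B₂ with the subspace topology inherited from H(A₂) is a countably infinite discrete space, i.e., it is homeomorphic to the space ℕ of natural numbers with the discrete topology. -/

import Mathlib

open Set TopologicalSpace Topology

/-- The Hattori topology τ(A) on ℝ: generated by the Euclidean open sets together with
all sets [x, x+ε) with x ∈ ℝ \ A and ε > 0. -/
def hattori (A : Set ℝ) : TopologicalSpace ℝ :=
  TopologicalSpace.generateFrom
    ({s : Set ℝ | IsOpen s} ∪ {s : Set ℝ | ∃ x ∉ A, ∃ ε > 0, s = Set.Ico x (x + ε)})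

/-- `B₂`: the set of right endpoints of the closed intervals appearing in the standard
middle-thirds construction of the Cantor set. -/
def B2 : Set ℝ :=
  {x | ∃ n : ℕ, ∃ c : ℕ → ℝ, (∀ i, c i = 0 ∨ c i = 2) ∧
    x = (∑ i ∈ Finset.range n, c i / 3 ^ (i + 1)) + 1 / 3 ^ n}

/-- `A₂ = ℝ \ B₂`. -/
def A2 : Set ℝ := B2ᶜ

/-!
The Hattori topology `τ(A)` lies between the Euclidean topology and the Sorgenfrey topology,
so a Euclidean nowhere dense set stays nowhere dense in `H(A)`. The set `B₂` lies in the Cantor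
set, which is closed and totally disconnected, hence nowhere dense.

Since `B₂ = B₂ / 3 ∪ (2 + B₂) / 3`, an induction along this self-similarity shows that every
`b ∈ B₂` has a gap `(b, b + ε)` free of `B₂`; as `b ∉ A₂`, the set `[b, b + ε)` is open in
`H(A₂)` and isolates `b`. So `B₂` is discrete, and it is countable (it consists of rationals)
and infinite.
-/

section Hattori

variable {A : Set ℝ}

theorem isOpen_hattori_of_isOpen {U : Set ℝ} (hU : IsOpen U) : IsOpen[hattori A] U :=
  isOpen_generateFrom_of_mem (Or.inl hU)

theorem isOpen_hattori_Ico {x : ℝ} (hx : x ∉ A) {ε : ℝ} (hε : 0 < ε) :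
    IsOpen[hattori A] (Ico x (x + ε)) :=
  isOpen_generateFrom_of_mem (Or.inr ⟨x, hx, ε, hε, rfl⟩)

theorem mem_nhdsGE_of_isOpen_hattori {U : Set ℝ} (hU : IsOpen[hattori A] U) {y : ℝ}
    (hy : y ∈ U) : U ∈ 𝓝[≥] y := by
  induction hU generalizing y with
  | basic s hs =>
    rcases hs with hs | ⟨x, -, ε, -, rfl⟩
    · exact mem_nhdsWithin_of_mem_nhds ((show IsOpen s from hs).mem_nhds hy)
    · exact Filter.mem_of_superset (Ico_mem_nhdsGE hy.2) (Ico_subset_Ico_left hy.1)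
  | univ => exact Filter.univ_mem
  | inter s t _ _ hs ht => exact Filter.inter_mem (hs hy.1) (ht hy.2)
  | sUnion S _ hS =>
    obtain ⟨s, hsS, hys⟩ := hy
    exact Filter.mem_of_superset (hS s hsS hys) (subset_sUnion_of_mem hsS)

theorem isNowhereDense_hattori {s : Set ℝ} (hs : IsNowhereDense s) :
    @IsNowhereDense ℝ (hattori A) s := by
  have hclosed : IsClosed[hattori A] (closure s) :=
    @IsClosed.mk ℝ (hattori A) _ (isOpen_hattori_of_isOpen isClosed_closure.isOpen_compl)
  have hclosure : closure[hattori A] s ⊆ closure s :=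
    @closure_minimal ℝ (hattori A) _ _ subset_closure hclosed
  refine eq_empty_of_forall_notMem fun y hy => ?_
  obtain ⟨U, hUs, hU, hyU⟩ := (@mem_interior ℝ (hattori A) _ _).1 hy
  obtain ⟨u, hyu, hIco⟩ := mem_nhdsGE_iff_exists_Ico_subset.1 (mem_nhdsGE_of_isOpen_hattori hU hyU)
  have hIoo : Ioo y u ⊆ interior (closure s) :=
    interior_maximal (Ioo_subset_Ico_self.trans (hIco.trans (hUs.trans hclosure))) isOpen_Ioo
  rw [hs] at hIoo
  exact (nonempty_Ioo.2 hyu).ne_empty (subset_empty_iff.1 hIoo)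

theorem induced_hattori_eq_bot {s : Set ℝ} (hsA : ∀ x ∈ s, x ∉ A)
    (hs : ∀ x ∈ s, ∃ ε > 0, ∀ y ∈ s, y ∉ Ioo x (x + ε)) :
    induced ((↑) : s → ℝ) (hattori A) = ⊥ := by
  refine eq_bot_of_singletons_open fun x => ?_
  obtain ⟨ε, hε, hgap⟩ := hs x x.2
  refine ⟨Ico x (x + ε), isOpen_hattori_Ico (hsA x x.2) hε, ?_⟩
  ext y
  simp only [mem_preimage, mem_singleton_iff]
  constructor
  · intro hy
    by_contra hne
    exact hgap y y.2 ⟨lt_of_le_of_ne hy.1 (Subtype.coe_ne_coe.2 (Ne.symm hne)), hy.2⟩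
  · rintro rfl
    exact ⟨le_rfl, lt_add_of_pos_right _ hε⟩

end Hattori

theorem IsTotallyDisconnected.interior_eq_empty {s : Set ℝ} (hs : IsTotallyDisconnected s) :
    interior s = ∅ := by
  refine eq_empty_of_forall_notMem fun y hy => ?_
  obtain ⟨a, b, hyab, hab⟩ := mem_nhds_iff_exists_Ioo_subset.1 (mem_interior_iff_mem_nhds.1 hy)
  have hmid : (a + y) / 2 ∈ Ioo a b := ⟨by linarith [hyab.1], by linarith [hyab.1, hyab.2]⟩
  have := hs _ hab isPreconnected_Ioo hyab hmid
  linarith [hyab.1]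

theorem isNowhereDense_cantorSet : IsNowhereDense cantorSet := by
  have : TotallyDisconnectedSpace cantorSet :=
    cantorSetHomeomorphNatToBool.symm.totallyDisconnectedSpace
  exact isClosed_cantorSet.isNowhereDense_iff.2
    (totallyDisconnectedSpace_subtype_iff.1 this).interior_eq_empty

theorem one_mem_cantorSet : (1 : ℝ) ∈ cantorSet :=
  mem_iInter.2 fun n => by
    induction n with
    | zero => simp
    | succ n ih => exact Or.inr ⟨1, ih, by norm_num⟩

theorem one_mem_B2 : (1 : ℝ) ∈ B2 := ⟨0, 0, by simp, by simp⟩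

theorem B2_induction {P : ℝ → Prop} (one : P 1)
    (step : ∀ x ∈ B2, P x → P (x / 3) ∧ P ((2 + x) / 3)) : ∀ x ∈ B2, P x := by
  rintro x ⟨n, c, hc, rfl⟩
  induction n generalizing c with
  | zero => simpa using one
  | succ n ih =>
    set y := ∑ i ∈ Finset.range n, c (i + 1) / 3 ^ (i + 1) + 1 / 3 ^ n
    have hy : y ∈ B2 := ⟨n, fun i => c (i + 1), fun i => hc (i + 1), rfl⟩
    have hxy : ∑ i ∈ Finset.range (n + 1), c i / 3 ^ (i + 1) + 1 / 3 ^ (n + 1)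
        = (c 0 + y) / 3 := by
      have hterm : ∀ i, c (i + 1) / 3 ^ (i + 1 + 1) = c (i + 1) / 3 ^ (i + 1) / 3 :=
        fun i => by rw [pow_succ, div_div]
      rw [Finset.sum_range_succ', Finset.sum_congr rfl fun i _ => hterm i, ← Finset.sum_div,
        pow_succ]
      ring
    rw [hxy]
    rcases hc 0 with h | h <;> rw [h]
    · simpa using (step y hy (ih _ fun i => hc (i + 1))).1
    · exact (step y hy (ih _ fun i => hc (i + 1))).2

theorem B2_subset_union_thirds : B2 ⊆ (· / 3) '' B2 ∪ (fun x ↦ (2 + x) / 3) '' B2 :=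
  B2_induction (Or.inr ⟨1, one_mem_B2, by norm_num⟩) fun x hx _ =>
    ⟨Or.inl ⟨x, hx, rfl⟩, Or.inr ⟨x, hx, rfl⟩⟩

theorem B2_subset_cantorSet : B2 ⊆ cantorSet :=
  B2_induction one_mem_cantorSet fun x _ hx => by
    rw [cantorSet_eq_union_halves]
    exact ⟨Or.inl ⟨x, hx, rfl⟩, Or.inr ⟨x, hx, rfl⟩⟩

theorem B2_subset_Icc : B2 ⊆ Icc 0 1 :=
  B2_subset_cantorSet.trans cantorSet_subset_unitInterval

theorem exists_Ioo_gap_of_mem_B2 : ∀ x ∈ B2, ∃ ε > 0, ∀ y ∈ B2, y ∉ Ioo x (x + ε) := by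
  refine B2_induction ⟨1, one_pos, fun y hy h => (B2_subset_Icc hy).2.not_gt h.1⟩ ?_
  rintro x hx ⟨ε, hε, hgap⟩
  have hδ : 0 < min (ε / 3) (1 / 3) := by positivity
  have hδε : min (ε / 3) (1 / 3) ≤ ε / 3 := min_le_left _ _
  have hδ3 : min (ε / 3) (1 / 3) ≤ 1 / 3 := min_le_right _ _
  -- Within one third the gap shrinks by a factor `3`; the two thirds are `1 / 3` apart.
  refine ⟨⟨_, hδ, ?_⟩, ⟨_, hδ, ?_⟩⟩ <;> rintro z hz ⟨hz₁, hz₂⟩ <;>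
    rcases B2_subset_union_thirds hz with ⟨w, hw, rfl⟩ | ⟨w, hw, rfl⟩
  · exact hgap w hw ⟨by linarith, by linarith⟩
  · linarith [(B2_subset_Icc hw).1, (B2_subset_Icc hx).2]
  · linarith [(B2_subset_Icc hw).2, (B2_subset_Icc hx).1]
  · exact hgap w hw ⟨by linarith, by linarith⟩

theorem B2_subset_range_ratCast : B2 ⊆ range ((↑) : ℚ → ℝ) :=
  B2_induction ⟨1, Rat.cast_one⟩ fun _ _ ⟨q, hq⟩ =>
    ⟨⟨q / 3, by push_cast [hq]; rfl⟩, ⟨(2 + q) / 3, by push_cast [hq]; rfl⟩⟩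

theorem B2_countable : B2.Countable :=
  (countable_range _).mono B2_subset_range_ratCast

theorem B2_infinite : B2.Infinite :=
  infinite_of_injective_forall_mem (f := fun n : ℕ => 1 / (3 : ℝ) ^ n)
    (fun a b h => by simpa using h) fun n => ⟨n, 0, by simp, by simp⟩

/-- B₂ is nowhere dense in H(A₂), and B₂ with the subspace topology from H(A₂)
is homeomorphic to ℕ with the discrete topology. -/
theorem B2_nowhereDense_and_homeomorphic_nat :
    @IsNowhereDense ℝ (hattori A2) B2 ∧
    Nonempty (@Homeomorph ↥B2 ℕ
      (TopologicalSpace.induced ((↑) : B2 → ℝ) (hattori A2)) ⊥) := by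
  refine ⟨isNowhereDense_hattori (isNowhereDense_cantorSet.mono B2_subset_cantorSet), ?_⟩
  rw [induced_hattori_eq_bot (A := A2) (fun _ hx hxA => hxA hx) exists_Ioo_gap_of_mem_B2]
  have : Countable B2 := B2_countable.to_subtype
  have : Infinite B2 := B2_infinite.to_subtype
  obtain ⟨e⟩ := nonempty_equiv_of_countable (α := B2) (β := ℕ)
  exact ⟨@Equiv.toHomeomorphOfDiscrete _ _ ⊥ ⊥ (discreteTopology_bot _)
    (discreteTopology_bot _) e⟩
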